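/- In the regret game, the common expected payoff at the profile where every player chooses risky is at least the common expected payoff at the profile where every player chooses safe if and only if v ≥ (1/p)·(1 + κ·(1−p)). That is, uniform adoption of the risky lottery Pareto dominates uniform adoption of the safe lottery exactly when the risky lottery is dominant; hence in the coordination range 1/p ≤ v ≤ (1/p)·(1 + κ·(1−p)) the all-safe equilibrium is Pareto optimal. -/

import Mathlib

namespace RegretGame

/-- An action in the regret game: choose the risky lottery or the safe lottery. -/
inductive Act : Type
  | risky : Act
  | safe : Act
deriving DecidableEq, Repr

/-- `numRisky a i` is the number of players other than `i` choosing the risky lottery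
at the action profile `a`. -/
def numRisky {N : ℕ} (a : Fin N → Act) (i : Fin N) : ℕ :=
  (Finset.univ.filter (fun j => j ≠ i ∧ a j = Act.risky)).card

/-- Player `i`'s expected payoff in the regret game at action profile `a`, given the
success probability `p`, coefficient of regret aversion `κ`, normalized good-state
payoff `v` of the risky lottery, and the information function `q` (the probability of
learning the risky outcome, as a function of how many of the others chose risky). -/
noncomputable def payoff {N : ℕ} (p κ v : ℝ) (q : ℕ → ℝ)
    (a : Fin N → Act) (i : Fin N) : ℝ :=
  if a i = Act.risky then p * v - (1 - p) * κ
  else 1 - p * q (numRisky a i) * κ * (v - 1)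

/-- A pure strategy Nash equilibrium of the regret game: no player can strictly
increase her expected payoff by unilaterally changing her own action. -/
def IsNash {N : ℕ} (p κ v : ℝ) (q : ℕ → ℝ) (a : Fin N → Act) : Prop :=
  ∀ (i : Fin N) (b : Act),
    payoff p κ v q (Function.update a i b) i ≤ payoff p κ v q a i

theorem numRisky_const_safe {N : ℕ} (i : Fin N) : numRisky (fun _ => Act.safe) i = 0 := by
  simp [numRisky]

theorem payoff_const_safe {N : ℕ} {p κ v : ℝ} {q : ℕ → ℝ} (hq0 : q 0 = 0) (i : Fin N) :
    payoff p κ v q (fun _ => Act.safe) i = 1 := by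
  simp [payoff, numRisky_const_safe, hq0]

theorem payoff_const_risky {N : ℕ} (p κ v : ℝ) (q : ℕ → ℝ) (i : Fin N) :
    payoff p κ v q (fun _ => Act.risky) i = p * v - (1 - p) * κ :=
  if_pos rfl

theorem one_le_riskyPayoff_iff {p κ v : ℝ} (hp : 0 < p) :
    1 ≤ p * v - (1 - p) * κ ↔ (1 / p) * (1 + κ * (1 - p)) ≤ v := by
  rw [one_div, inv_mul_le_iff₀ hp]
  constructor <;> intro h <;> linarith

theorem riskyPayoff_le_one_iff {p κ v : ℝ} (hp : 0 < p) :
    p * v - (1 - p) * κ ≤ 1 ↔ v ≤ (1 / p) * (1 + κ * (1 - p)) := by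
  rw [one_div, le_inv_mul_iff₀ hp]
  constructor <;> intro h <;> linarith

theorem regret_game_welfare_general
    (N : ℕ) (hN : 2 ≤ N) (p κ v : ℝ)
    (hp : 0 < p ∧ p < 1)
    (q : ℕ → ℝ)
    (hq0 : q 0 = 0) :
    ((∀ i : Fin N,
        payoff p κ v q (fun _ : Fin N => Act.safe) i ≤
          payoff p κ v q (fun _ : Fin N => Act.risky) i) ↔
      v ≥ (1 / p) * (1 + κ * (1 - p))) ∧
    (1 / p ≤ v → v ≤ (1 / p) * (1 + κ * (1 - p)) →
      ∀ i : Fin N,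
        payoff p κ v q (fun _ : Fin N => Act.risky) i ≤
          payoff p κ v q (fun _ : Fin N => Act.safe) i) := by
  have : Nonempty (Fin N) := ⟨⟨0, by omega⟩⟩
  simp only [payoff_const_safe hq0, payoff_const_risky, ge_iff_le]
  exact ⟨forall_const _ |>.trans (one_le_riskyPayoff_iff hp.1),
    fun _ h _ => (riskyPayoff_le_one_iff hp.1).2 h⟩

/-- In the regret game, the common expected payoff at the all-risky profile is at
least the common expected payoff at the all-safe profile if and only if
`v ≥ (1/p)·(1 + κ·(1−p))`; hence in the coordination range
`1/p ≤ v ≤ (1/p)·(1 + κ·(1−p))` the all-safe equilibrium is Pareto optimal. -/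
theorem regret_game_welfare
    (N : ℕ) (hN : 2 ≤ N) (p κ v : ℝ)
    (hp : 0 < p ∧ p < 1) (hκ : 0 < κ) (hv : 1 < v)
    (q : ℕ → ℝ)
    (hq01 : ∀ m ≤ N - 1, 0 ≤ q m ∧ q m ≤ 1)
    (hq0 : q 0 = 0) (hqN : q (N - 1) = 1)
    (hqmono : ∀ m₁ m₂, m₁ < m₂ → m₂ ≤ N - 1 → q m₁ < q m₂) :
    ((∀ i : Fin N,
        payoff p κ v q (fun _ : Fin N => Act.safe) i ≤
          payoff p κ v q (fun _ : Fin N => Act.risky) i) ↔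
      v ≥ (1 / p) * (1 + κ * (1 - p))) ∧
    (1 / p ≤ v → v ≤ (1 / p) * (1 + κ * (1 - p)) →
      ∀ i : Fin N,
        payoff p κ v q (fun _ : Fin N => Act.risky) i ≤
          payoff p κ v q (fun _ : Fin N => Act.safe) i) :=
  regret_game_welfare_general N hN p κ v hp q hq0

end RegretGame
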